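/- arXiv:1806.10983 — 2 statements merged into one kernel-verified Lean document; each statement's English description precedes it below -/
import Mathlib

section
/- If a countable discrete group Γ has a central element of infinite order, then the complex group ring ℂΓ is not C*_r-unique, i.e., there exists a C*-norm on ℂΓ properly majorized by the reduced norm. -/
set_option maxHeartbeats 1000000
set_option synthInstance.maxHeartbeats 400000
noncomputable section

open scoped ENNReal

/-- ℓ²(Γ), the Hilbert space of square-summable complex functions on `G`. -/
abbrev l2 (G : Type*) := lp (fun _ : G => ℂ) 2

namespace GroupCstar

lemma two_toReal_pos : 0 < (2 : ℝ≥0∞).toReal := by norm_num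

/-- The linear isometry of ℓ² spaces induced by a bijection of index sets,
`f ↦ f ∘ e.symm`. -/
def lpShift {α β : Type*} (e : α ≃ β) : l2 α ≃ₗᵢ[ℂ] l2 β where
  toFun f := ⟨fun b => f (e.symm b), by
    show Memℓp _ 2
    rw [memℓp_gen_iff two_toReal_pos]
    exact e.symm.summable_iff.2 ((lp.memℓp f).summable two_toReal_pos)⟩
  invFun f := ⟨fun a => f (e a), by
    show Memℓp _ 2
    rw [memℓp_gen_iff two_toReal_pos]
    exact e.summable_iff.2 ((lp.memℓp f).summable two_toReal_pos)⟩
  map_add' f g := rfl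
  map_smul' c f := rfl
  left_inv f := by ext a; simp
  right_inv f := by ext b; simp
  norm_map' f := by
    rw [lp.norm_eq_tsum_rpow two_toReal_pos, lp.norm_eq_tsum_rpow two_toReal_pos]
    congr 1
    exact Equiv.tsum_eq e.symm fun b => ‖f b‖ ^ (2 : ℝ≥0∞).toReal

@[simp] lemma lpShift_apply {α β : Type*} (e : α ≃ β) (f : l2 α) (b : β) :
    (lpShift e f : ∀ _ : β, ℂ) b = f (e.symm b) := rfl

variable (G : Type*) [Group G]

/-- The algebra `B(ℓ²(G))` of bounded operators on `ℓ²(G)`. -/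
abbrev B := l2 G →L[ℂ] l2 G

variable {G}

/-- The left regular representation of a group element, as a bounded (unitary) operator on
ℓ²(G): `(leftReg g f) x = f (g⁻¹ * x)`. -/
def leftReg (g : G) : B G :=
  (lpShift (Equiv.mulLeft g)).toLinearIsometry.toContinuousLinearMap

@[simp] lemma leftReg_apply (g : G) (f : l2 G) (x : G) :
    (leftReg g f : ∀ _ : G, ℂ) x = f (g⁻¹ * x) := rfl

variable (G)

/-- The left regular representation as a monoid homomorphism into bounded operators. -/
def leftRegMonoidHom : G →* B G where
  toFun := leftReg
  map_one' := by ext f x; simp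
  map_mul' g h := by ext f x; simp [mul_assoc]

/-- The left regular representation `λ` of the complex group algebra `ℂ[G]` on `ℓ²(G)`,
extending `g ↦ leftReg g` linearly. -/
def lam : MonoidAlgebra ℂ G →ₐ[ℂ] B G :=
  (MonoidAlgebra.lift ℂ (B G) G) (leftRegMonoidHom G)

/-- δ_e, the canonical trace vector in ℓ²(G). -/
def deltaOne : l2 G :=
  letI := Classical.decEq G
  lp.single 2 (1 : G) (1 : ℂ)

variable {G}

/-- The canonical trace `τ(x) = ⟨x δ_e, δ_e⟩` on `B(ℓ²(G))` (in particular on the group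
von Neumann algebra).  Note: with the mathematician's convention (linear in the first
variable) `⟨x δ_e, δ_e⟩` is `inner δ_e (x δ_e)` in Mathlib's convention. -/
def tau (x : B G) : ℂ := inner (𝕜 := ℂ) (deltaOne G) (x (deltaOne G))

/-- The commutant of a set of bounded operators. -/
def commutant (S : Set (B G)) : Set (B G) := {x | ∀ s ∈ S, s * x = x * s}

variable (G)

/-- The group von Neumann algebra `LG`, realized as the double commutant of `λ(ℂ[G])`
inside `B(ℓ²(G))`. -/
def vN : Set (B G) := commutant (commutant (Set.range (lam G)))

/-- The center `Z(LG)` of the group von Neumann algebra. -/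
def vNCenter : Set (B G) := {x | x ∈ vN G ∧ ∀ y ∈ vN G, x * y = y * x}

variable {G}

/-- An orthogonal projection: a self-adjoint idempotent. -/
def IsProjection (p : B G) : Prop := IsSelfAdjoint p ∧ p * p = p

variable (G)

/-- The central granularity `σ(G)`: the infimum of the traces of the nonzero orthogonal
projections in the center of the group von Neumann algebra. -/
def centralGranularity : ℝ :=
  sInf ((fun p => (tau p).re) '' {p : B G | p ∈ vNCenter G ∧ IsProjection p ∧ p ≠ 0})

/-- The set of orders of finite subgroups of `G`. -/
def finSubgroupOrders : Set ℕ := {n | ∃ H : Subgroup G, Finite H ∧ Nat.card H = n}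

open scoped Classical in
/-- The torsion multiplier `θ(G) = 1 / lcm {|H| : H ≤ G finite}`, with the convention
that the lcm of an unbounded set is `∞` and `1/∞ = 0`. -/
def torsionMultiplier : ℝ :=
  if h : (finSubgroupOrders G).Finite then ((h.toFinset.lcm id : ℕ) : ℝ)⁻¹ else 0

/-- The additive subgroup of `ℝ` generated by the reciprocals of the orders of the finite
subgroups of `G`. -/
def atiyahGroup : AddSubgroup ℝ :=
  AddSubgroup.closure {x : ℝ | ∃ H : Subgroup G, Finite H ∧ x = ((Nat.card H : ℝ))⁻¹}

/-- The operator `L_A` on `ℓ²(G)ⁿ` associated to a matrix `A ∈ Mₙ(ℂ[G])`, given by applying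
`λ` entrywise and letting the resulting matrix of operators act. -/
def LA {n : ℕ} (A : Matrix (Fin n) (Fin n) (MonoidAlgebra ℂ G)) :
    PiLp 2 (fun _ : Fin n => l2 G) →L[ℂ] PiLp 2 (fun _ : Fin n => l2 G) :=
  letI e := PiLp.continuousLinearEquiv 2 ℂ (fun _ : Fin n => l2 G)
  ((e.symm : (∀ _ : Fin n, l2 G) →L[ℂ] PiLp 2 (fun _ : Fin n => l2 G)).comp
      (ContinuousLinearMap.pi fun i =>
        ∑ j, (lam G (A i j)).comp (ContinuousLinearMap.proj j))).comp
    (e : PiLp 2 (fun _ : Fin n => l2 G) →L[ℂ] (∀ _ : Fin n, l2 G))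

/-- The vector `δ_e eᵢ` in `ℓ²(G)ⁿ`. -/
def stdv {n : ℕ} (i : Fin n) : PiLp 2 (fun _ : Fin n => l2 G) :=
  (WithLp.equiv 2 (∀ _ : Fin n, l2 G)).symm (Pi.single i (deltaOne G))

/-- The von Neumann dimension `dim_{LG} ker L_A = Σᵢ ⟨P (δ_e eᵢ), δ_e eᵢ⟩`, where `P` is the
orthogonal projection onto the kernel of `L_A`. -/
def kerDim {n : ℕ} (A : Matrix (Fin n) (Fin n) (MonoidAlgebra ℂ G)) : ℝ :=
  haveI : CompleteSpace (PiLp 2 (fun _ : Fin n => l2 G)) := inferInstance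
  haveI : Submodule.HasOrthogonalProjection (LinearMap.ker (LA G A :
      PiLp 2 (fun _ : Fin n => l2 G) →ₗ[ℂ] PiLp 2 (fun _ : Fin n => l2 G))) :=
    Submodule.HasOrthogonalProjection.ofCompleteSpace _
  ∑ i, (inner (𝕜 := ℂ)
    ((Submodule.orthogonalProjectionOnto (LinearMap.ker (LA G A :
        PiLp 2 (fun _ : Fin n => l2 G) →ₗ[ℂ] PiLp 2 (fun _ : Fin n => l2 G))) (stdv G i) :
        PiLp 2 (fun _ : Fin n => l2 G)))
    (stdv G i)).re

/-- `G` satisfies the strong Atiyah conjecture: all von Neumann kernel dimensions of matrices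
over `ℂ[G]` lie in the additive subgroup generated by the reciprocals of the orders of finite
subgroups. -/
def SatisfiesStrongAtiyah : Prop :=
  ∀ n : ℕ, 1 ≤ n → ∀ A : Matrix (Fin n) (Fin n) (MonoidAlgebra ℂ G), kerDim G A ∈ atiyahGroup G

variable {G}

/-- The canonical involution on the complex group algebra: `star (Σ cg·g) = Σ conj(cg)·g⁻¹`. -/
def gaStar (a : MonoidAlgebra ℂ G) : MonoidAlgebra ℂ G :=
  MonoidAlgebra.ofCoeff
    (Finsupp.mapDomain (fun g : G => g⁻¹) (Finsupp.mapRange (starRingEnd ℂ) (map_zero _) a.coeff))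

/-- `N` is a C*-norm on the group algebra `ℂ[G]`: a genuine algebra norm satisfying the
C*-identity `N(a* a) = N(a)²`. -/
def IsCstarNorm (N : MonoidAlgebra ℂ G → ℝ) : Prop :=
  (∀ a, 0 ≤ N a) ∧
  (∀ a, N a = 0 ↔ a = 0) ∧
  (∀ a b, N (a + b) ≤ N a + N b) ∧
  (∀ (c : ℂ) (a), N (c • a) = ‖c‖ * N a) ∧
  (∀ a b, N (a * b) ≤ N a * N b) ∧
  (∀ a, N (gaStar a * a) = N a ^ 2)

variable (G)

/-- `ℂ[G]` is C*_r-unique: no C*-norm on `ℂ[G]` is properly majorized by the reduced norm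
`a ↦ ‖λ(a)‖`. -/
def IsCstarRedUnique : Prop :=
  ¬ ∃ N : MonoidAlgebra ℂ G → ℝ, IsCstarNorm N ∧
      (∀ a, N a ≤ ‖lam G a‖) ∧ (∃ a, N a < ‖lam G a‖)

variable {G}

/-- The conjugacy class of an element. -/
def conjClass (g : G) : Set G := {x | IsConj g x}

variable (G)

/-- The FC-centre: the set of elements with finite conjugacy class. -/
def fcCentre : Set G := {g : G | (conjClass g).Finite}

end GroupCstar

open GroupCstar

/-!
Write `Q = Γ ⧸ ⟨z⟩`. For `t` on the unit circle let `π_t` be the representation of `Γ` induced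
from the character `z ↦ t` of `⟨z⟩ ≅ ℤ`; it acts on `ℓ²(Q)`, and `π_t(z) = t` because `z` is
central. Since `ℤ` is amenable, `π_t` is weakly contained in the left regular representation:
spreading a finitely supported `η ∈ ℓ²(Q)` over the windows `q.out * z ^ k`, `|k| ≤ n`, gives
Følner vectors whose normalized `λ`-matrix coefficients tend to those of `π_t`, so
`‖π_t(a)‖ ≤ ‖λ(a)‖`. The supremum of `‖π_t(a)‖` over the infinite arc `Re t ≤ -1/2` is therefore a
C*-norm below the reduced one (faithful because a nonzero Laurent polynomial has finitely many
roots), and it is at most `1` at `1 + z`, whereas `‖λ(1 + z)‖ ≥ √2`.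
-/

open Filter Topology
open scoped InnerProductSpace ComplexConjugate

section Unitary

variable {𝕜 H G : Type*} [RCLike 𝕜] [NormedAddCommGroup H] [InnerProductSpace 𝕜 H]
  [CompleteSpace H] [Group G]

lemma MonoidHom.star_apply_of_isometry (ρ : G →* (H →L[𝕜] H)) (hρ : ∀ g x, ‖ρ g x‖ = ‖x‖)
    (g : G) : star (ρ g) = ρ g⁻¹ := by
  have hunit : star (ρ g) * ρ g = 1 :=
    (ContinuousLinearMap.norm_map_iff_adjoint_comp_self (ρ g)).mp (hρ g)
  calc star (ρ g) = star (ρ g) * (ρ g * ρ g⁻¹) := by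
        rw [← map_mul, mul_inv_cancel, map_one, mul_one]
    _ = ρ g⁻¹ := by rw [← mul_assoc, hunit, one_mul]

end Unitary

namespace lp

variable {α : Type*}

lemma sum_single_apply {ι : Type*} [DecidableEq ι] [DecidableEq α] (e : ι ≃ α) (I : Finset ι)
    (c : ι → ℂ) (x : α) : ((∑ i ∈ I, lp.single 2 (e i) (c i) : l2 α) : α → ℂ) x
      = if e.symm x ∈ I then c (e.symm x) else 0 := by
  simp only [lp.coeFn_sum, Finset.sum_apply, lp.coeFn_single, Pi.single_apply,
    ← e.symm_apply_eq]
  exact Finset.sum_ite_eq I _ c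

lemma inner_sum_single_left {ι : Type*} [DecidableEq α] (I : Finset ι) (x : ι → α) (c : ι → ℂ)
    (f : l2 α) : ⟪∑ i ∈ I, lp.single 2 (x i) (c i), f⟫_ℂ = ∑ i ∈ I, conj (c i) * f (x i) := by
  simp only [sum_inner, lp.inner_single_left, RCLike.inner_apply, mul_comm]

lemma inner_eq_sum_of_support_subset {η : l2 α} {s : Finset α} (hη : ∀ q ∉ s, η q = 0)
    (f : l2 α) : ⟪η, f⟫_ℂ = ∑ q ∈ s, conj (η q) * f q := by
  rw [lp.inner_eq_tsum, tsum_eq_sum (s := s) fun q hq => by simp [hη q hq]]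
  simp only [RCLike.inner_apply, mul_comm]

lemma opNorm_le_of_finite_support {E : Type*} [NormedAddCommGroup E] [NormedSpace ℂ E]
    (T : l2 α →L[ℂ] E) {C : ℝ} (hC : 0 ≤ C)
    (h : ∀ (s : Finset α) (η : l2 α), (∀ q ∉ s, η q = 0) → ‖T η‖ ≤ C * ‖η‖) : ‖T‖ ≤ C := by
  classical
  refine T.opNorm_le_bound hC fun f => ?_
  have hsum : Tendsto (fun s : Finset α => ∑ q ∈ s, lp.single 2 q (f q)) atTop (𝓝 f) :=
    lp.hasSum_single (by norm_num) f
  refine le_of_tendsto_of_tendsto' ((T.continuous.tendsto f).comp hsum).norm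
    (hsum.norm.const_mul C) fun s => h s _ fun q hq => ?_
  simpa [hq] using lp.sum_single_apply (Equiv.refl α) s (fun i => f i) q

end lp

def lpCircleMul {α : Type*} (c : α → Circle) : l2 α →ₗᵢ[ℂ] l2 α where
  toFun f := ⟨fun x => c x * f x, (lp.memℓp f).mono' fun x => by simp [Circle.norm_coe]⟩
  map_add' f g := by ext x; exact mul_add (c x : ℂ) (f x) (g x)
  map_smul' a f := by ext x; simp [mul_left_comm]
  norm_map' f := le_antisymm (lp.norm_mono two_ne_zero fun x => by simp [Circle.norm_coe])
    (lp.norm_mono two_ne_zero fun x => by simp [Circle.norm_coe])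

@[simp] lemma lpCircleMul_apply {α : Type*} (c : α → Circle) (f : l2 α) (x : α) :
    (lpCircleMul c f : α → ℂ) x = c x * f x := rfl

lemma norm_le_of_tendsto_inner {F : Type*} [NormedAddCommGroup F] [InnerProductSpace ℂ F]
    (T : F →L[ℂ] F) {w : ℕ → F} {c : ℕ → ℝ} {r : ℝ} (hc : ∀ n, 0 < c n)
    (hw : ∀ n, ‖w n‖ ^ 2 = c n * r) {y : ℂ}
    (h : Tendsto (fun n => (c n : ℂ)⁻¹ * ⟪w n, T (w n)⟫_ℂ) atTop (𝓝 y)) :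
    ‖y‖ ≤ ‖T‖ * r := by
  refine le_of_tendsto' h.norm fun n => ?_
  have hinner : ‖⟪w n, T (w n)⟫_ℂ‖ ≤ ‖T‖ * (c n * r) := calc
    _ ≤ ‖w n‖ * (‖T‖ * ‖w n‖) :=
      (norm_inner_le_norm _ _).trans (mul_le_mul_of_nonneg_left (T.le_opNorm _) (norm_nonneg _))
    _ = ‖T‖ * (c n * r) := by rw [← hw]; ring
  rw [norm_mul, norm_inv, Complex.norm_real, Real.norm_of_nonneg (hc n).le,
    inv_mul_le_iff₀ (hc n)]
  linarith

lemma eq_zero_of_sum_mul_zpow_eq_zero {K ι : Type*} [Field K] {S : Finset ι} {e : ι → ℤ}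
    (he : Set.InjOn e S) (c : ι → K) {T : Set K} (hT : T.Infinite) (hT0 : 0 ∉ T)
    (h : ∀ t ∈ T, ∑ i ∈ S, c i * t ^ e i = 0) : ∀ i ∈ S, c i = 0 := by
  classical
  set M : ℕ := S.sup fun i => (e i).natAbs
  have hM (i) (hi : i ∈ S) : 0 ≤ e i + M := by
    have := Finset.le_sup (f := fun i => (e i).natAbs) hi
    omega
  set P : Polynomial K := ∑ i ∈ S, Polynomial.C (c i) * Polynomial.X ^ (e i + M).toNat
  have hroot : ∀ t ∈ T, P.IsRoot t := by
    intro t ht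
    have ht0 : t ≠ 0 := fun h0 => hT0 (h0 ▸ ht)
    have heval : P.eval t = (∑ i ∈ S, c i * t ^ e i) * t ^ M := by
      simp only [P, Polynomial.eval_finsetSum, Finset.sum_mul, Polynomial.eval_mul,
        Polynomial.eval_C, Polynomial.eval_pow, Polynomial.eval_X]
      refine Finset.sum_congr rfl fun i hi => ?_
      rw [mul_assoc, ← zpow_natCast, ← zpow_natCast, ← zpow_add₀ ht0,
        Int.toNat_of_nonneg (hM i hi)]
    rw [Polynomial.IsRoot, heval, h t ht, zero_mul]
  have hP : P = 0 := Polynomial.eq_zero_of_infinite_isRoot P (hT.mono hroot)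
  intro i hi
  have hcoeff := congrArg (Polynomial.coeff · (e i + M).toNat) hP
  simp only [P, Polynomial.finsetSum_coeff, Polynomial.coeff_C_mul_X_pow,
    Polynomial.coeff_zero] at hcoeff
  have hexp (j) (hj : j ∈ S) (hij : (e i + M).toNat = (e j + M).toNat) : j = i :=
    he hj hi (by have := hM i hi; have := hM j hj; omega)
  rwa [Finset.sum_eq_single_of_mem i hi fun j hj hji => if_neg (hji ∘ hexp j hj), if_pos rfl]
    at hcoeff

def overlapCount (n : ℕ) (m : ℤ) : ℕ :=
  ((Finset.Icc (-n : ℤ) n).filter fun k => m + k ∈ Finset.Icc (-n : ℤ) n).card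

lemma overlapCount_eq (n : ℕ) (m : ℤ) :
    (overlapCount n m : ℤ) = max 0 (2 * n + 1 - m.natAbs) := by
  have h : (Finset.Icc (-n : ℤ) n).filter (fun k => m + k ∈ Finset.Icc (-n : ℤ) n)
      = Finset.Icc (max (-n : ℤ) (-n - m)) (min (n : ℤ) (n - m)) := by
    ext k
    simp only [Finset.mem_filter, Finset.mem_Icc, le_min_iff, max_le_iff]
    omega
  rw [overlapCount, h, Int.card_Icc]
  omega

lemma overlapCount_zero (n : ℕ) : overlapCount n 0 = 2 * n + 1 := by
  have := overlapCount_eq n 0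
  omega

lemma tendsto_overlapCount_div (m : ℤ) :
    Tendsto (fun n : ℕ => (overlapCount n m : ℝ) / (2 * n + 1)) atTop (𝓝 1) := by
  have hev : (fun n : ℕ => 1 - (m.natAbs : ℝ) / (2 * n + 1)) =ᶠ[atTop]
      fun n : ℕ => (overlapCount n m : ℝ) / (2 * n + 1) := by
    filter_upwards [eventually_ge_atTop m.natAbs] with n hn
    have hcount : (overlapCount n m : ℝ) = 2 * n + 1 - m.natAbs := by
      have := overlapCount_eq n m
      have : (overlapCount n m : ℤ) = 2 * n + 1 - m.natAbs := by omega
      exact_mod_cast this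
    rw [hcount, sub_div, div_self (by positivity)]
  refine Tendsto.congr' hev ?_
  have h2n : Tendsto (fun n : ℕ => (2 * n + 1 : ℝ)) atTop atTop :=
    tendsto_atTop_add_const_right _ _ (tendsto_natCast_atTop_atTop.const_mul_atTop two_pos)
  simpa using tendsto_const_nhds.sub (tendsto_const_nhds.div_atTop h2n)

section Decomposition

variable {Γ : Type*} [Group Γ] {z : Γ}

lemma mk_out_mul_zpow (q : Γ ⧸ Subgroup.zpowers z) (k : ℤ) :
    ((q.out * z ^ k : Γ) : Γ ⧸ Subgroup.zpowers z) = q := by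
  rw [QuotientGroup.mk_mul_of_mem _ (Subgroup.zpow_mem_zpowers z k), QuotientGroup.out_eq']

lemma bijective_out_mul_zpow (hord : ¬ IsOfFinOrder z) :
    Function.Bijective fun p : (Γ ⧸ Subgroup.zpowers z) × ℤ => p.1.out * z ^ p.2 := by
  refine ⟨fun p p' h => ?_, fun x => ?_⟩
  · have hq : p.1 = p'.1 := by
      simpa only [mk_out_mul_zpow] using congrArg ((↑) : Γ → Γ ⧸ Subgroup.zpowers z) h
    simp only [hq, mul_right_inj] at h
    exact Prod.ext hq (injective_zpow_iff_not_isOfFinOrder.mpr hord h)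
  · obtain ⟨⟨_, k, rfl⟩, hk⟩ := QuotientGroup.mk_out_eq_mul (Subgroup.zpowers z) x
    exact ⟨(x, -k), by simp [hk, zpow_neg]⟩

def zpowersDecomp (hord : ¬ IsOfFinOrder z) : (Γ ⧸ Subgroup.zpowers z) × ℤ ≃ Γ :=
  Equiv.ofBijective _ (bijective_out_mul_zpow hord)

variable (hord : ¬ IsOfFinOrder z)

@[simp] lemma zpowersDecomp_apply (p : (Γ ⧸ Subgroup.zpowers z) × ℤ) :
    zpowersDecomp hord p = p.1.out * z ^ p.2 := rfl

lemma zpowersDecomp_symm_eq_iff (x : Γ) (p : (Γ ⧸ Subgroup.zpowers z) × ℤ) :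
    (zpowersDecomp hord).symm x = p ↔ x = p.1.out * z ^ p.2 :=
  (zpowersDecomp hord).symm_apply_eq

@[simp] lemma zpowersDecomp_symm_fst (x : Γ) : ((zpowersDecomp hord).symm x).1 = x := by
  conv_rhs => rw [← (zpowersDecomp hord).apply_symm_apply x]
  exact (mk_out_mul_zpow _ _).symm

lemma zpowersDecomp_symm_out (q : Γ ⧸ Subgroup.zpowers z) :
    (zpowersDecomp hord).symm q.out = (q, 0) := by
  simp [zpowersDecomp_symm_eq_iff]

lemma zpowersDecomp_symm_mul_zpow (x : Γ) (k : ℤ) :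
    (zpowersDecomp hord).symm (x * z ^ k)
      = (((zpowersDecomp hord).symm x).1, ((zpowersDecomp hord).symm x).2 + k) := by
  rw [zpowersDecomp_symm_eq_iff, zpow_add, ← mul_assoc]
  congr 1
  exact ((zpowersDecomp hord).apply_symm_apply x).symm

lemma zpowersDecomp_symm_mul_snd (g x : Γ) :
    ((zpowersDecomp hord).symm (g * x)).2
      = ((zpowersDecomp hord).symm (g * (x : Γ ⧸ Subgroup.zpowers z).out)).2
        + ((zpowersDecomp hord).symm x).2 := by
  conv_lhs => rw [← (zpowersDecomp hord).apply_symm_apply x, zpowersDecomp_apply,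
    zpowersDecomp_symm_fst, ← mul_assoc, zpowersDecomp_symm_mul_zpow]

lemma zpowersDecomp_symm_mul_out_mul_zpow (γ : Γ) (q : Γ ⧸ Subgroup.zpowers z) (k : ℤ) :
    (zpowersDecomp hord).symm (γ * (q.out * z ^ k))
      = (γ • q, ((zpowersDecomp hord).symm (γ * q.out)).2 + k) := by
  rw [← mul_assoc, zpowersDecomp_symm_mul_zpow, zpowersDecomp_symm_fst, ← smul_eq_mul,
    MulAction.Quotient.mk_smul_out]

lemma mk_mul_out_mul_zpow (γ : Γ) (q : Γ ⧸ Subgroup.zpowers z) (k : ℤ) :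
    ((γ * (q.out * z ^ k) : Γ) : Γ ⧸ Subgroup.zpowers z) = γ • q := by
  rw [← mul_assoc, QuotientGroup.mk_mul_of_mem _ (Subgroup.zpow_mem_zpowers z k), ← smul_eq_mul,
    MulAction.Quotient.mk_smul_out]

end Decomposition

namespace GroupCstar

section GroupAlgebra

variable {G : Type*} [Group G]

lemma gaStar_single (g : G) (c : ℂ) :
    gaStar (MonoidAlgebra.single g c) = MonoidAlgebra.single g⁻¹ (conj c) := by
  show MonoidAlgebra.ofCoeff (Finsupp.mapDomain _ (Finsupp.mapRange _ _ (Finsupp.single g c))) = _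
  rw [Finsupp.mapRange_single, Finsupp.mapDomain_single]
  rfl

lemma gaStar_add (a b : MonoidAlgebra ℂ G) : gaStar (a + b) = gaStar a + gaStar b := by
  show MonoidAlgebra.ofCoeff (Finsupp.mapDomain _ (Finsupp.mapRange _ _ (a.coeff + b.coeff))) = _
  rw [Finsupp.mapRange_add (map_add (starRingEnd ℂ)), Finsupp.mapDomain_add]
  rfl

lemma lift_gaStar {A : Type*} [Ring A] [StarRing A] [Algebra ℂ A] [StarModule ℂ A]
    (ρ : G →* A) (hρ : ∀ g, star (ρ g) = ρ g⁻¹) (a : MonoidAlgebra ℂ G) :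
    MonoidAlgebra.lift ℂ A G ρ (gaStar a) = star (MonoidAlgebra.lift ℂ A G ρ a) := by
  induction a using MonoidAlgebra.induction_linear with
  | zero => simp [gaStar]
  | add a b ha hb => rw [gaStar_add, map_add, map_add, ha, hb, star_add]
  | single g c =>
    rw [gaStar_single, MonoidAlgebra.lift_single, MonoidAlgebra.lift_single, star_smul, hρ]
    rfl

lemma lam_gaStar (a : MonoidAlgebra ℂ G) : lam G (gaStar a) = star (lam G a) :=
  lift_gaStar _ ((leftRegMonoidHom G).star_apply_of_isometry
    fun g => (lpShift (Equiv.mulLeft g)).norm_map) a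

theorem isCstarNorm_iSup {ι A : Type*} [NormedRing A] [StarRing A] [CStarRing A]
    [NormedAlgebra ℂ A] (ρ : ι → MonoidAlgebra ℂ G →ₐ[ℂ] A)
    (hstar : ∀ i a, ρ i (gaStar a) = star (ρ i a))
    (hbdd : ∀ a, BddAbove (Set.range fun i => ‖ρ i a‖))
    (hfaithful : ∀ a, (∀ i, ρ i a = 0) → a = 0) :
    IsCstarNorm fun a => ⨆ i, ‖ρ i a‖ := by
  have hle (a) (i) : ‖ρ i a‖ ≤ ⨆ i, ‖ρ i a‖ := le_ciSup (hbdd a) i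
  have hnonneg (a) : 0 ≤ ⨆ i, ‖ρ i a‖ := Real.iSup_nonneg fun i => norm_nonneg _
  refine ⟨hnonneg, fun a => ⟨fun h => hfaithful a fun i => ?_, ?_⟩, fun a b => ?_, fun c a => ?_,
    fun a b => ?_, fun a => ?_⟩
  · exact norm_le_zero_iff.mp (h ▸ hle a i)
  · rintro rfl
    simp
  · refine Real.iSup_le (fun i => ?_) (add_nonneg (hnonneg a) (hnonneg b))
    rw [map_add]
    exact (norm_add_le _ _).trans (add_le_add (hle a i) (hle b i))
  · simp only [map_smul, norm_smul, Real.mul_iSup_of_nonneg (norm_nonneg c)]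
  · refine Real.iSup_le (fun i => ?_) (mul_nonneg (hnonneg a) (hnonneg b))
    rw [map_mul]
    exact (norm_mul_le _ _).trans (mul_le_mul (hle a i) (hle b i) (norm_nonneg _) (hnonneg a))
  · have hsq (i) : ‖ρ i (gaStar a * a)‖ = ‖ρ i a‖ ^ 2 := by
      rw [map_mul, hstar, CStarRing.norm_star_mul_self, sq]
    simp only [hsq]
    exact (Real.iSup_pow_of_ne_zero (fun i => norm_nonneg _) two_ne_zero).symm

lemma norm_apply_le_of_norm_inner_le {H A : Type*} [NormedAddCommGroup H]
    [InnerProductSpace ℂ H] [CompleteSpace H] [NormedRing A] [StarRing A] [CStarRing A]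
    [NormedAlgebra ℂ A] (π : MonoidAlgebra ℂ G →ₐ[ℂ] (H →L[ℂ] H))
    (ρ : MonoidAlgebra ℂ G →ₐ[ℂ] A) (hπ : ∀ a, π (gaStar a) = star (π a))
    (hρ : ∀ a, ρ (gaStar a) = star (ρ a)) {η : H}
    (h : ∀ b, ‖⟪η, π b η⟫_ℂ‖ ≤ ‖ρ b‖ * ‖η‖ ^ 2) (a : MonoidAlgebra ℂ G) :
    ‖π a η‖ ≤ ‖ρ a‖ * ‖η‖ := by
  have hsq : ‖π a η‖ ^ 2 ≤ (‖ρ a‖ * ‖η‖) ^ 2 := calc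
    ‖π a η‖ ^ 2 = ‖⟪η, π (gaStar a * a) η⟫_ℂ‖ := by
      rw [map_mul, hπ, ContinuousLinearMap.star_eq_adjoint, mul_apply_eq_comp,
        ContinuousLinearMap.adjoint_inner_right, inner_self_eq_norm_sq_to_K, norm_pow]
      simp
    _ ≤ ‖ρ (gaStar a * a)‖ * ‖η‖ ^ 2 := h _
    _ = (‖ρ a‖ * ‖η‖) ^ 2 := by rw [map_mul, hρ, CStarRing.norm_star_mul_self]; ring
  exact (pow_le_pow_iff_left₀ (norm_nonneg _) (by positivity) two_ne_zero).mp hsq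

end GroupAlgebra

section InducedRep

variable {Γ : Type*} [Group Γ] {z : Γ} (hord : ¬ IsOfFinOrder z) (t : Circle)

/-- The representation of `Γ` induced from the character `z ↦ t` of `⟨z⟩`. -/
def indMonoidHom :
    Γ →* (l2 (Γ ⧸ Subgroup.zpowers z) →L[ℂ] l2 (Γ ⧸ Subgroup.zpowers z)) where
  toFun γ := ((lpCircleMul fun q => t ^ (-((zpowersDecomp hord).symm (γ⁻¹ * q.out)).2)).comp
    (lpShift (MulAction.toPerm γ)).toLinearIsometry).toContinuousLinearMap
  map_one' := by
    ext f q
    simp [zpowersDecomp_symm_out]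
  map_mul' γ₁ γ₂ := by
    ext f q
    show ((t ^ (-((zpowersDecomp hord).symm ((γ₁ * γ₂)⁻¹ * q.out)).2) : Circle) : ℂ)
        * f ((γ₁ * γ₂)⁻¹ • q)
      = (t ^ (-((zpowersDecomp hord).symm (γ₁⁻¹ * q.out)).2) : Circle)
        * ((t ^ (-((zpowersDecomp hord).symm (γ₂⁻¹ * (γ₁⁻¹ • q).out)).2) : Circle)
          * f (γ₂⁻¹ • γ₁⁻¹ • q))
    rw [mul_inv_rev, mul_smul, mul_assoc, zpowersDecomp_symm_mul_snd hord γ₂⁻¹,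
      ← smul_eq_mul γ₁⁻¹ q.out, MulAction.Quotient.mk_smul_out, neg_add, zpow_add,
      Circle.coe_mul, mul_assoc]
    exact mul_left_comm _ _ _

variable {hord t}

@[simp] lemma indMonoidHom_apply (γ : Γ) (f : l2 (Γ ⧸ Subgroup.zpowers z))
    (q : Γ ⧸ Subgroup.zpowers z) :
    (indMonoidHom hord t γ f : Γ ⧸ Subgroup.zpowers z → ℂ) q
      = (t ^ (-((zpowersDecomp hord).symm (γ⁻¹ * q.out)).2) : Circle) * f (γ⁻¹ • q) := rfl

lemma norm_indMonoidHom_apply (γ : Γ) (f : l2 (Γ ⧸ Subgroup.zpowers z)) :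
    ‖indMonoidHom hord t γ f‖ = ‖f‖ :=
  ((lpCircleMul _).norm_map _).trans ((lpShift _).norm_map f)

lemma indMonoidHom_of_mem_center (hz : z ∈ Subgroup.center Γ) :
    indMonoidHom hord t z = (t : ℂ) • 1 := by
  ext f q
  have hcomm : z⁻¹ * q.out = q.out * z ^ (-1 : ℤ) := by
    rw [zpow_neg_one]; exact (Subgroup.mem_center_iff.mp (Subgroup.inv_mem _ hz) q.out).symm
  have hq : z⁻¹ • q = q := by
    rw [← MulAction.Quotient.mk_smul_out, smul_eq_mul, hcomm, mk_out_mul_zpow]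
  rw [indMonoidHom_apply, hcomm, zpowersDecomp_symm_mul_zpow, zpowersDecomp_symm_out, hq]
  simp

variable (hord t)

def indRep : MonoidAlgebra ℂ Γ →ₐ[ℂ]
    (l2 (Γ ⧸ Subgroup.zpowers z) →L[ℂ] l2 (Γ ⧸ Subgroup.zpowers z)) :=
  MonoidAlgebra.lift ℂ _ Γ (indMonoidHom hord t)

lemma indRep_gaStar (a : MonoidAlgebra ℂ Γ) :
    indRep hord t (gaStar a) = star (indRep hord t a) :=
  lift_gaStar _ ((indMonoidHom hord t).star_apply_of_isometry norm_indMonoidHom_apply) a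

end InducedRep

section Folner

variable {Γ : Type*} [Group Γ] {z : Γ} (hord : ¬ IsOfFinOrder z) (t : Circle)

open scoped Classical in
def folnerVector (n : ℕ) (s : Finset (Γ ⧸ Subgroup.zpowers z))
    (η : l2 (Γ ⧸ Subgroup.zpowers z)) : l2 Γ :=
  ∑ p ∈ s ×ˢ Finset.Icc (-n : ℤ) n,
    lp.single 2 (zpowersDecomp hord p) ((t ^ (-p.2) : Circle) * η p.1)

variable {hord t} {s : Finset (Γ ⧸ Subgroup.zpowers z)} {η : l2 (Γ ⧸ Subgroup.zpowers z)}

lemma folnerVector_apply (hη : ∀ q ∉ s, η q = 0) (n : ℕ) (x : Γ) :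
    (folnerVector hord t n s η : Γ → ℂ) x
      = if ((zpowersDecomp hord).symm x).2 ∈ Finset.Icc (-n : ℤ) n then
          (t ^ (-((zpowersDecomp hord).symm x).2) : Circle) * η x
        else 0 := by
  classical
  rw [folnerVector, lp.sum_single_apply]
  by_cases hq : (x : Γ ⧸ Subgroup.zpowers z) ∈ s
  · simp [Finset.mem_product, hq]
  · simp [Finset.mem_product, hq, hη _ hq]

lemma inner_folnerVector_leftReg (hη : ∀ q ∉ s, η q = 0) (n : ℕ) (γ : Γ) :
    ⟪folnerVector hord t n s η, leftReg γ (folnerVector hord t n s η)⟫_ℂ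
      = ∑ q ∈ s, (overlapCount n ((zpowersDecomp hord).symm (γ⁻¹ * q.out)).2 : ℂ)
          * (conj (η q) * (indMonoidHom hord t γ η : _ → ℂ) q) := by
  classical
  nth_rewrite 1 [folnerVector]
  rw [lp.inner_sum_single_left, Finset.sum_product]
  refine Finset.sum_congr rfl fun q _ => ?_
  simp only [leftReg_apply, zpowersDecomp_apply, folnerVector_apply hη,
    zpowersDecomp_symm_mul_out_mul_zpow, mk_mul_out_mul_zpow, indMonoidHom_apply]
  generalize ((zpowersDecomp hord).symm (γ⁻¹ * q.out)).2 = c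
  have htwist (k : ℤ) : conj ((t ^ (-k) : Circle) : ℂ) * (t ^ (-(c + k)) : Circle)
      = (t ^ (-c) : Circle) := by
    rw [← Circle.coe_inv_eq_conj, ← Circle.coe_mul, ← zpow_neg, ← zpow_add]
    congr 2
    ring
  calc _ = ∑ k ∈ Finset.Icc (-n : ℤ) n, (if c + k ∈ Finset.Icc (-n : ℤ) n then
          conj (η q) * ((t ^ (-c) : Circle) * η (γ⁻¹ • q)) else 0) := by
        refine Finset.sum_congr rfl fun k _ => ?_
        split_ifs
        · rw [map_mul, ← htwist k]
          ring
        · rw [mul_zero]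
    _ = _ := by rw [← Finset.sum_filter, Finset.sum_const, nsmul_eq_mul, overlapCount]

lemma tendsto_inner_folnerVector_lam (hη : ∀ q ∉ s, η q = 0) (a : MonoidAlgebra ℂ Γ) :
    Tendsto (fun n : ℕ => ((2 * n + 1 : ℝ) : ℂ)⁻¹
        * ⟪folnerVector hord t n s η, lam Γ a (folnerVector hord t n s η)⟫_ℂ)
      atTop (𝓝 ⟪η, indRep hord t a η⟫_ℂ) := by
  induction a using MonoidAlgebra.induction_linear with
  | zero => simp
  | add a b ha hb =>
    simpa only [map_add, add_apply, inner_add_right, mul_add] using ha.add hb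
  | single γ c =>
    simp only [lam, indRep, MonoidAlgebra.lift_single, smul_apply,
      inner_smul_right, mul_left_comm _ c]
    refine Tendsto.const_mul c ?_
    simp only [leftRegMonoidHom, MonoidHom.coe_mk, OneHom.coe_mk, inner_folnerVector_leftReg hη,
      lp.inner_eq_sum_of_support_subset hη, Finset.mul_sum]
    refine tendsto_finsetSum _ fun q _ => ?_
    have h := ((Complex.continuous_ofReal.tendsto 1).comp (tendsto_overlapCount_div
      ((zpowersDecomp hord).symm (γ⁻¹ * q.out)).2)).mul_const
        (conj (η q) * (indMonoidHom hord t γ η : _ → ℂ) q)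
    simp only [Function.comp_def, Complex.ofReal_one, one_mul] at h
    refine h.congr fun n => ?_
    push_cast
    ring

lemma norm_folnerVector_sq (hη : ∀ q ∉ s, η q = 0) (n : ℕ) :
    ‖folnerVector hord t n s η‖ ^ 2 = (2 * n + 1) * ‖η‖ ^ 2 := by
  have h := inner_folnerVector_leftReg (hord := hord) (t := t) hη n 1
  have h1 : leftReg (1 : Γ) = 1 := (leftRegMonoidHom Γ).map_one
  simp only [h1, inv_one, one_mul, zpowersDecomp_symm_out, overlapCount_zero, map_one,
    ← Finset.mul_sum, ← lp.inner_eq_sum_of_support_subset hη, one_apply_eq_self,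
    inner_self_eq_norm_sq_to_K] at h
  apply Complex.ofReal_injective
  push_cast at h ⊢
  exact h

theorem norm_indRep_le (a : MonoidAlgebra ℂ Γ) : ‖indRep hord t a‖ ≤ ‖lam Γ a‖ := by
  refine lp.opNorm_le_of_finite_support _ (norm_nonneg _) fun s η hη => ?_
  refine norm_apply_le_of_norm_inner_le _ _ (indRep_gaStar hord t) lam_gaStar (fun b => ?_) a
  exact norm_le_of_tendsto_inner (lam Γ b) (fun n => by positivity) (norm_folnerVector_sq hη)
    (tendsto_inner_folnerVector_lam hη b)

end Folner

section Faithful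

variable {Γ : Type*} [Group Γ] {z : Γ} {hord : ¬ IsOfFinOrder z}

open scoped Classical in
lemma indRep_apply_single_apply (t : Circle) (a : MonoidAlgebra ℂ Γ)
    (p q : Γ ⧸ Subgroup.zpowers z) :
    (indRep hord t a (lp.single 2 p 1) : Γ ⧸ Subgroup.zpowers z → ℂ) q
      = (∑ γ ∈ a.coeff.support, if γ⁻¹ • q = p then
          a.coeff γ * (t ^ (-((zpowersDecomp hord).symm (γ⁻¹ * q.out)).2) : Circle)
        else 0 : ℂ) := by
  rw [indRep, MonoidAlgebra.lift_apply, Finsupp.sum, sum_apply, lp.coeFn_sum,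
    Finset.sum_apply]
  refine Finset.sum_congr rfl fun γ _ => ?_
  simp [Pi.single_apply, mul_comm]

theorem eq_zero_of_forall_indRep_eq_zero {T : Set Circle} (hT : T.Infinite)
    {a : MonoidAlgebra ℂ Γ} (h : ∀ t ∈ T, indRep hord t a = 0) : a = 0 := by
  classical
  ext γ₀
  by_contra hne
  -- The `(q₀, γ₀⁻¹ • q₀)` matrix coefficient of `indRep hord t a` is a Laurent polynomial in `t`
  -- with coefficients the `a γ` for `γ⁻¹ • q₀ = γ₀⁻¹ • q₀`, and pairwise distinct exponents.
  set q₀ : Γ ⧸ Subgroup.zpowers z := ((1 : Γ) : Γ ⧸ Subgroup.zpowers z)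
  set S := a.coeff.support.filter fun γ => γ⁻¹ • q₀ = γ₀⁻¹ • q₀
  set e : Γ → ℤ := fun γ => -((zpowersDecomp hord).symm (γ⁻¹ * q₀.out)).2
  have he : Set.InjOn e S := by
    intro γ₁ h₁ γ₂ h₂ heq
    have hfst (γ) (hγ : γ ∈ S) : ((zpowersDecomp hord).symm (γ⁻¹ * q₀.out)).1 = γ₀⁻¹ • q₀ := by
      rw [zpowersDecomp_symm_fst, ← smul_eq_mul, MulAction.Quotient.mk_smul_out]
      exact (Finset.mem_filter.mp hγ).2
    have hsymm : (zpowersDecomp hord).symm (γ₁⁻¹ * q₀.out)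
        = (zpowersDecomp hord).symm (γ₂⁻¹ * q₀.out) :=
      Prod.ext ((hfst γ₁ h₁).trans (hfst γ₂ h₂).symm) (neg_injective heq)
    simpa using (zpowersDecomp hord).symm.injective hsymm
  have hroots : ∀ t ∈ ((↑) : Circle → ℂ) '' T, ∑ γ ∈ S, a.coeff γ * t ^ e γ = 0 := by
    rintro _ ⟨t, ht, rfl⟩
    have hcoord := indRep_apply_single_apply (hord := hord) t a (γ₀⁻¹ • q₀) q₀
    rw [h t ht, zero_apply, lp.coeFn_zero, Pi.zero_apply] at hcoord
    rw [Finset.sum_filter]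
    exact hcoord.symm
  refine hne (eq_zero_of_sum_mul_zpow_eq_zero he a.coeff (hT.image Circle.coe_injective.injOn)
    (fun ⟨t, _, ht⟩ => Circle.coe_ne_zero t ht) hroots γ₀ ?_)
  simpa [S] using hne

end Faithful

def leftArc : Set Circle := {t | (t : ℂ).re ≤ -1 / 2}

lemma leftArc_infinite : leftArc.Infinite := by
  have hre : Set.Icc (-1 : ℝ) (-1 / 2) ⊆ (fun t : Circle => (t : ℂ).re) '' leftArc := by
    rintro x ⟨hx₁, hx₂⟩
    have hnorm : ‖(⟨x, √(1 - x ^ 2)⟩ : ℂ)‖ = 1 := by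
      rw [Complex.norm_def, Complex.normSq_mk, Real.mul_self_sqrt (by nlinarith),
        show x * x + (1 - x ^ 2) = 1 by ring, Real.sqrt_one]
    exact ⟨⟨_, mem_sphere_zero_iff_norm.2 hnorm⟩, hx₂, rfl⟩
  exact Set.Infinite.of_image _ ((Set.Icc_infinite (by norm_num)).mono hre)

lemma norm_one_add_le_one {t : Circle} (ht : t ∈ leftArc) : ‖1 + (t : ℂ)‖ ≤ 1 := by
  have hsq : ‖1 + (t : ℂ)‖ ^ 2 = 2 + 2 * (t : ℂ).re := by
    have ht1 := Circle.normSq_coe t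
    rw [Complex.normSq_apply] at ht1
    rw [← Complex.normSq_eq_norm_sq, Complex.normSq_apply]
    simp only [Complex.add_re, Complex.one_re, Complex.add_im, Complex.one_im]
    linear_combination ht1
  have ht' : (t : ℂ).re ≤ -1 / 2 := ht
  nlinarith [norm_nonneg (1 + (t : ℂ))]

lemma norm_indRep_one_add_single_le {Γ : Type*} [Group Γ] {z : Γ} (hord : ¬ IsOfFinOrder z)
    (hz : z ∈ Subgroup.center Γ) (t : Circle) :
    ‖indRep hord t (1 + MonoidAlgebra.single z 1)‖ ≤ ‖1 + (t : ℂ)‖ := by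
  rw [map_add, map_one, indRep, MonoidAlgebra.lift_single, indMonoidHom_of_mem_center hz,
    one_smul, ← one_smul ℂ (1 : l2 (Γ ⧸ Subgroup.zpowers z) →L[ℂ] _), smul_smul, mul_one,
    ← add_smul]
  exact (norm_smul_le _ _).trans (mul_le_of_le_one_right (norm_nonneg _)
    ContinuousLinearMap.norm_id_le)

lemma one_lt_norm_lam_one_add_single {Γ : Type*} [Group Γ] {z : Γ} (hz : z ≠ 1) :
    1 < ‖lam Γ (1 + MonoidAlgebra.single z 1)‖ := by
  classical
  set δ : l2 Γ := lp.single 2 1 1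
  have hδ : ‖δ‖ = 1 := by simp [δ, lp.norm_single]
  have hlam : lam Γ (1 + MonoidAlgebra.single z 1) δ = δ + lp.single 2 z 1 := by
    rw [map_add, map_one, lam, MonoidAlgebra.lift_single, one_smul]
    ext x
    simp [δ, leftRegMonoidHom, Pi.single_apply, inv_mul_eq_one, eq_comm]
  have horth : ⟪δ, lp.single 2 z 1⟫_ℂ = 0 := by
    simp [δ, lp.inner_single_left, hz.symm]
  have hnorm : ‖lam Γ (1 + MonoidAlgebra.single z 1) δ‖ ^ 2 = 2 := by
    rw [hlam, sq, norm_add_sq_eq_norm_sq_add_norm_sq_of_inner_eq_zero _ _ horth, hδ,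
      lp.norm_single (by norm_num)]
    norm_num
  have hle := (lam Γ (1 + MonoidAlgebra.single z 1)).le_opNorm δ
  rw [hδ, mul_one] at hle
  nlinarith [norm_nonneg (lam Γ (1 + MonoidAlgebra.single z 1) δ)]

end GroupCstar

theorem not_cstarRedUnique_of_central_element_of_infinite_order_general
    (Γ : Type*) [Group Γ] (z : Γ) (hz : z ∈ Subgroup.center Γ)
    (hord : ¬ IsOfFinOrder z) :
    ¬ IsCstarRedUnique Γ := by
  set ρ : leftArc → MonoidAlgebra ℂ Γ →ₐ[ℂ] _ := fun t => indRep hord t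
  have hle (t) (a) : ‖ρ t a‖ ≤ ‖lam Γ a‖ := norm_indRep_le a
  have hcstar : IsCstarNorm fun a => ⨆ t, ‖ρ t a‖ :=
    isCstarNorm_iSup ρ (fun t => indRep_gaStar hord t)
      (fun a => ⟨_, Set.forall_mem_range.2 (hle · a)⟩)
      fun a ha => eq_zero_of_forall_indRep_eq_zero leftArc_infinite fun t ht => ha ⟨t, ht⟩
  refine fun hU => hU ⟨_, hcstar, fun a => Real.iSup_le (hle · a) (norm_nonneg _),
    1 + MonoidAlgebra.single z 1, ?_⟩
  calc ⨆ t, ‖ρ t (1 + MonoidAlgebra.single z 1)‖ ≤ 1 := Real.iSup_le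
        (fun t => (norm_indRep_one_add_single_le hord hz t).trans (norm_one_add_le_one t.2))
        zero_le_one
    _ < _ := one_lt_norm_lam_one_add_single (by rintro rfl; exact hord IsOfFinOrder.one)

/-- If a countable discrete group has a central element of infinite order,
then its complex group ring is not C*_r-unique. -/
theorem not_cstarRedUnique_of_central_element_of_infinite_order
    (Γ : Type*) [Group Γ] [Countable Γ] (z : Γ) (hz : z ∈ Subgroup.center Γ)
    (hord : ¬ IsOfFinOrder z) :
    ¬ IsCstarRedUnique Γ :=
  not_cstarRedUnique_of_central_element_of_infinite_order_general Γ z hz hord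
end
end

section
/- Let Γ be a countable discrete group whose FC-centre Γ_fc is finite. Then the central granularity of Γ is σ(Γ) = 1/|Γ_fc|, i.e., the infimum of τ(p) over nonzero orthogonal projections p in the center of the group von Neumann algebra LΓ equals 1/|Γ_fc|, and it is attained. -/
set_option maxHeartbeats 1000000
set_option synthInstance.maxHeartbeats 400000
noncomputable section

open scoped ENNReal

/-!
If `p` is a central projection, the vector `ξ = p δ_e` is invariant under conjugation, since `p`
commutes with the left regular representation (`p` is central) and with the right one (`p ∈ LΓ`).
Being square-summable, `ξ` is therefore supported on the finite FC-centre `F`. As `p` is a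
self-adjoint idempotent commuting with `λ`, we have `τ(p) = ‖ξ‖²` and
`|ξ(g)| = |⟪λ_g ξ, ξ⟫| ≤ ‖ξ‖²`, so `τ(p) = ∑_{g ∈ F} |ξ(g)|² ≤ |F| τ(p)²`; and `ξ ≠ 0` because
`δ_e` is separating for central self-adjoint operators. Hence `τ(p) ≥ 1/|F|`. Since `F` is a finite
normal subgroup, the average `|F|⁻¹ ∑_{g ∈ F} λ_g` is a central projection of trace exactly `1/|F|`.
-/

namespace GroupCstar

local notation "⟪" x ", " y "⟫" => @inner ℂ _ _ x y

lemma IsProjection.apply_apply {G : Type*} {p : B G} (hp : IsProjection p) (f : l2 G) :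
    p (p f) = p f :=
  DFunLike.congr_fun hp.2 f

lemma l2_norm_sq_eq_sum {α : Type*} (f : l2 α) {s : Finset α} (hs : ∀ x ∉ s, f x = 0) :
    ‖f‖ ^ 2 = ∑ x ∈ s, ‖f x‖ ^ 2 := by
  have h := lp.norm_rpow_eq_tsum (by norm_num : 0 < (2 : ℝ≥0∞).toReal) f
  simp only [ENNReal.toReal_ofNat, Real.rpow_two] at h
  rw [h, tsum_eq_sum fun x hx => by simp [hs x hx]]

variable {G : Type*} [Group G]

section FCCentre

lemma conj_mem_fcCentre {g : G} (hg : g ∈ fcCentre G) (c : G) : c * g * c⁻¹ ∈ fcCentre G := by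
  show (conjugatesOf _).Finite
  rwa [← isConj_iff_conjugatesOf_eq.mp (isConj_iff.mpr ⟨c, rfl⟩)]

variable (G) in
def fcSubgroup : Subgroup G where
  carrier := fcCentre G
  one_mem' := (Set.finite_singleton 1).subset fun x hx => by
    obtain ⟨c, rfl⟩ := isConj_iff.mp hx
    simp
  mul_mem' {g h} hg hh := (hg.image2 (· * ·) hh).subset fun x hx => by
    obtain ⟨c, rfl⟩ := isConj_iff.mp hx
    exact ⟨_, isConj_iff.mpr ⟨c, rfl⟩, _, isConj_iff.mpr ⟨c, rfl⟩, by group⟩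
  inv_mem' {g} hg := hg.inv.subset fun x hx => by
    obtain ⟨c, rfl⟩ := isConj_iff.mp hx
    exact isConj_iff.mpr ⟨c, by group⟩

instance : (fcSubgroup G).Normal := ⟨fun _ hg c => conj_mem_fcCentre hg c⟩

lemma mem_fcCentre_of_tendsto_cofinite {E : Type*} [NormedAddCommGroup E] {f : G → E}
    (hf : Filter.Tendsto f Filter.cofinite (nhds 0)) (hconj : ∀ c x, f (c * x * c⁻¹) = f x)
    {x : G} (hx : f x ≠ 0) : x ∈ fcCentre G := by
  have hlarge := (tendsto_zero_iff_norm_tendsto_zero.mp hf).eventually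
    (gt_mem_nhds (norm_pos_iff.mpr hx))
  rw [Filter.eventually_cofinite] at hlarge
  refine hlarge.subset fun y hy => ?_
  obtain ⟨c, rfl⟩ := isConj_iff.mp hy
  simp [hconj]

end FCCentre

section RegularRepresentations

lemma deltaOne_apply_one : (deltaOne G : G → ℂ) 1 = 1 := by
  classical
  exact lp.single_apply_self (E := fun _ : G => ℂ) 2 1 1

lemma deltaOne_apply_of_ne_one {x : G} (hx : x ≠ 1) : (deltaOne G : G → ℂ) x = 0 := by
  classical
  exact lp.single_apply_ne (E := fun _ : G => ℂ) 2 1 1 hx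

lemma inner_deltaOne_left (f : l2 G) : ⟪deltaOne G, f⟫ = f 1 := by
  classical
  simp [deltaOne, lp.inner_single_left]

lemma star_leftReg (g : G) : star (leftReg g) = leftReg g⁻¹ := by
  refine ((ContinuousLinearMap.eq_adjoint_iff _ _).mpr fun f h => ?_).symm
  rw [← (lpShift (Equiv.mulLeft g)).inner_map_map]
  congr 1
  ext x
  simp [leftReg]

lemma inner_leftReg_deltaOne_left (g : G) (f : l2 G) : ⟪leftReg g (deltaOne G), f⟫ = f g := by
  rw [← ContinuousLinearMap.adjoint_inner_right, ← ContinuousLinearMap.star_eq_adjoint,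
    star_leftReg, inner_deltaOne_left, leftReg_apply, inv_inv, mul_one]

lemma leftReg_mul (g h : G) : leftReg (g * h) = leftReg g * leftReg h :=
  map_mul (leftRegMonoidHom G) g h

lemma lam_of (g : G) : lam G (MonoidAlgebra.of ℂ G g) = leftReg g := by
  simp [lam, leftRegMonoidHom]

lemma mem_commutant_range_lam_iff {x : B G} :
    x ∈ commutant (Set.range (lam G)) ↔ ∀ g, leftReg g * x = x * leftReg g := by
  refine ⟨fun hx g => hx _ ⟨_, lam_of g⟩, fun hx => ?_⟩
  rintro _ ⟨a, rfl⟩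
  induction a using MonoidAlgebra.induction_on with
  | of g => rw [lam_of, hx]
  | add a b ha hb => rw [map_add, add_mul, mul_add, ha, hb]
  | smul c a ha => rw [map_smul, smul_mul_assoc, mul_smul_comm, ha]

lemma lam_mem_vN (a : MonoidAlgebra ℂ G) : lam G a ∈ vN G :=
  fun _ hx => (hx _ ⟨a, rfl⟩).symm

lemma leftReg_mem_vN (g : G) : leftReg g ∈ vN G :=
  lam_of g ▸ lam_mem_vN _

def rightReg (g : G) : B G :=
  (lpShift (Equiv.mulRight g⁻¹)).toLinearIsometry.toContinuousLinearMap

lemma rightReg_apply (g : G) (f : l2 G) (x : G) : (rightReg g f : G → ℂ) x = f (x * g) := by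
  simp [rightReg]

lemma rightReg_mem_commutant (g : G) : rightReg g ∈ commutant (Set.range (lam G)) :=
  mem_commutant_range_lam_iff.mpr fun h => by
    ext f x
    simp [rightReg_apply, mul_assoc]

end RegularRepresentations

section CentralProjection

variable {p : B G}

lemma apply_deltaOne_conj (hp : p ∈ vNCenter G) (c x : G) :
    (p (deltaOne G) : G → ℂ) (c * x * c⁻¹) = (p (deltaOne G) : G → ℂ) x := by
  have hfix : leftReg c⁻¹ (rightReg c⁻¹ (deltaOne G)) = deltaOne G := by
    ext y
    rw [leftReg_apply, rightReg_apply, inv_inv]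
    by_cases hy : y = 1
    · simp [hy]
    · rw [deltaOne_apply_of_ne_one hy, deltaOne_apply_of_ne_one (by simpa [mul_inv_eq_one])]
  have hcomm : leftReg c⁻¹ * rightReg c⁻¹ * p = p * (leftReg c⁻¹ * rightReg c⁻¹) := by
    rw [mul_assoc, hp.1 _ (rightReg_mem_commutant _), ← mul_assoc,
      ← hp.2 _ (leftReg_mem_vN _), mul_assoc]
  have := congrArg (fun f : l2 G => (f : G → ℂ) x) (congrArg (· (deltaOne G)) hcomm)
  simpa [hfix, rightReg_apply, mul_assoc] using this

lemma apply_apply_eq_inner (hp : p ∈ vNCenter G) (hsa : IsSelfAdjoint p) (f : l2 G) (g : G) :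
    (p f : G → ℂ) g = ⟪leftReg g (p (deltaOne G)), f⟫ := by
  rw [← inner_leftReg_deltaOne_left, ← ContinuousLinearMap.adjoint_inner_left,
    ContinuousLinearMap.isSelfAdjoint_iff'.mp hsa]
  exact congrArg (⟪·, f⟫) (DFunLike.congr_fun (hp.2 _ (leftReg_mem_vN g)) _)

lemma apply_deltaOne_ne_zero (hp : p ∈ vNCenter G) (hsa : IsSelfAdjoint p) (hne : p ≠ 0) :
    p (deltaOne G) ≠ 0 := by
  refine fun h => hne (ContinuousLinearMap.ext fun f => lp.ext (funext fun g => ?_))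
  rw [apply_apply_eq_inner hp hsa, h, map_zero, inner_zero_left]
  rfl

lemma tau_re_eq_norm_sq (hp : IsProjection p) : (tau p).re = ‖p (deltaOne G)‖ ^ 2 := by
  conv_lhs => rw [tau, ← hp.apply_apply, ← ContinuousLinearMap.adjoint_inner_left,
    ContinuousLinearMap.isSelfAdjoint_iff'.mp hp.1]
  exact inner_self_eq_norm_sq (𝕜 := ℂ) _

lemma norm_apply_deltaOne_le (hp : p ∈ vNCenter G) (hproj : IsProjection p) (g : G) :
    ‖(p (deltaOne G) : G → ℂ) g‖ ≤ ‖p (deltaOne G)‖ ^ 2 := by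
  rw [← hproj.apply_apply, apply_apply_eq_inner hp hproj.1, hproj.apply_apply]
  calc _ ≤ ‖leftReg g (p (deltaOne G))‖ * ‖p (deltaOne G)‖ := norm_inner_le_norm _ _
    _ = ‖p (deltaOne G)‖ ^ 2 := by rw [leftReg, LinearIsometry.coe_toContinuousLinearMap,
      LinearIsometry.norm_map, sq]

lemma mem_fcCentre_of_apply_deltaOne_ne_zero (hp : p ∈ vNCenter G) {x : G}
    (hx : (p (deltaOne G) : G → ℂ) x ≠ 0) : x ∈ fcCentre G := by
  have hsum := (lp.memℓp (p (deltaOne G))).summable (by norm_num : 0 < (2 : ℝ≥0∞).toReal)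
  refine mem_fcCentre_of_tendsto_cofinite hsum.tendsto_cofinite_zero
    (fun c y => by simp only [apply_deltaOne_conj hp]) ?_
  positivity

lemma inv_card_le_tau_re (hp : p ∈ vNCenter G) (hproj : IsProjection p) (hne : p ≠ 0)
    {s : Finset G} (hs : fcCentre G ⊆ s) : ((s.card : ℝ))⁻¹ ≤ (tau p).re := by
  set t := ‖p (deltaOne G)‖ ^ 2
  have ht : 0 < t := by positivity [apply_deltaOne_ne_zero hp hproj.1 hne]
  have hsum : t ≤ s.card * t ^ 2 := calc
    t = ∑ x ∈ s, ‖(p (deltaOne G) : G → ℂ) x‖ ^ 2 := l2_norm_sq_eq_sum _ fun x hx => by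
      by_contra h
      exact hx (hs (mem_fcCentre_of_apply_deltaOne_ne_zero hp h))
    _ ≤ ∑ x ∈ s, t ^ 2 := by
      gcongr with x
      exact norm_apply_deltaOne_le hp hproj x
    _ = s.card * t ^ 2 := by rw [Finset.sum_const, nsmul_eq_mul]
  have hcard : 0 < (s.card : ℝ) := by nlinarith
  rw [tau_re_eq_norm_sq hproj, inv_le_iff_one_le_mul₀' hcard]
  nlinarith

end CentralProjection

section Averaging

variable (N : Subgroup G) [Fintype N]

def avgProj : B G := ((Fintype.card N : ℂ))⁻¹ • ∑ n : N, leftReg (n : G)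

lemma leftReg_mul_avgProj (n : N) : leftReg (n : G) * avgProj N = avgProj N := by
  rw [avgProj, mul_smul_comm, Finset.mul_sum]
  simp_rw [← leftReg_mul, ← Subgroup.coe_mul]
  exact congrArg _ (Equiv.sum_comp (Equiv.mulLeft n) fun m : N => leftReg (m : G))

lemma avgProj_mul_self : avgProj N * avgProj N = avgProj N := by
  have hcard : (Fintype.card N : ℂ) ≠ 0 := Nat.cast_ne_zero.mpr Fintype.card_ne_zero
  conv_lhs => arg 1; rw [avgProj]
  rw [smul_mul_assoc, Finset.sum_mul]
  simp_rw [leftReg_mul_avgProj, Finset.sum_const, Finset.card_univ, ← Nat.cast_smul_eq_nsmul ℂ,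
    smul_smul, inv_mul_cancel₀ hcard, one_smul]

lemma isSelfAdjoint_avgProj : IsSelfAdjoint (avgProj N) := by
  rw [IsSelfAdjoint, avgProj, star_smul, star_sum]
  simp_rw [star_leftReg, ← Subgroup.coe_inv]
  rw [star_inv₀, star_natCast]
  exact congrArg _ (Equiv.sum_comp (Equiv.inv N) fun m : N => leftReg (m : G))

lemma tau_avgProj : tau (avgProj N) = ((Fintype.card N : ℂ))⁻¹ := by
  rw [tau, avgProj, FunLike.coe_smul, Pi.smul_apply, inner_smul_right, FunLike.coe_sum,
    Finset.sum_apply, inner_sum, Finset.sum_eq_single 1 (fun n _ hn => ?_) (by simp)]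
  · simp [inner_deltaOne_left, deltaOne_apply_one]
  · rw [inner_deltaOne_left, leftReg_apply, mul_one,
      deltaOne_apply_of_ne_one (inv_ne_one.mpr (by exact_mod_cast hn))]

lemma isProjection_avgProj : IsProjection (avgProj N) :=
  ⟨isSelfAdjoint_avgProj N, avgProj_mul_self N⟩

lemma avgProj_ne_zero : avgProj N ≠ 0 := fun h => by
  simpa [h, tau, eq_comm] using tau_avgProj N

lemma avgProj_mem_commutant [N.Normal] : avgProj N ∈ commutant (Set.range (lam G)) := by
  refine mem_commutant_range_lam_iff.mpr fun g => ?_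
  rw [avgProj, mul_smul_comm, smul_mul_assoc, Finset.mul_sum, Finset.sum_mul]
  congr 1
  conv_rhs => rw [← (MulAut.conjNormal g).toEquiv.sum_comp]
  refine Finset.sum_congr rfl fun n _ => ?_
  simp [← leftReg_mul, mul_assoc]

lemma avgProj_mem_vNCenter [N.Normal] : avgProj N ∈ vNCenter G := by
  have hlam : avgProj N = lam G (((Fintype.card N : ℂ))⁻¹ • ∑ n : N, MonoidAlgebra.of ℂ G n) := by
    simp only [avgProj, map_smul, map_sum, lam_of]
  exact ⟨hlam ▸ lam_mem_vN _, fun y hy => hy _ (avgProj_mem_commutant N)⟩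

end Averaging

end GroupCstar

open GroupCstar

theorem centralGranularity_eq_of_finite_fcCentre_general
    (Γ : Type*) [Group Γ] (hfc : (fcCentre Γ).Finite) :
    centralGranularity Γ = ((Nat.card (fcCentre Γ) : ℝ))⁻¹ ∧
      ∃ p : B Γ, p ∈ vNCenter Γ ∧ IsProjection p ∧ p ≠ 0 ∧
        (tau p).re = ((Nat.card (fcCentre Γ) : ℝ))⁻¹ := by
  let : Fintype (fcSubgroup Γ) := hfc.fintype
  have hcard : Fintype.card (fcSubgroup Γ) = Nat.card (fcCentre Γ) := Nat.card_eq_fintype_card.symm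
  have hP : avgProj (fcSubgroup Γ) ∈ vNCenter Γ ∧ IsProjection (avgProj (fcSubgroup Γ)) ∧
      avgProj (fcSubgroup Γ) ≠ 0 ∧
      (tau (avgProj (fcSubgroup Γ))).re = ((Nat.card (fcCentre Γ) : ℝ))⁻¹ := by
    refine ⟨avgProj_mem_vNCenter _, isProjection_avgProj _, avgProj_ne_zero _, ?_⟩
    rw [tau_avgProj, ← hcard, ← Complex.ofReal_natCast, ← Complex.ofReal_inv, Complex.ofReal_re]
  have hlower : ((Nat.card (fcCentre Γ) : ℝ))⁻¹ ∈ lowerBounds ((fun p => (tau p).re) ''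
      {p : B Γ | p ∈ vNCenter Γ ∧ IsProjection p ∧ p ≠ 0}) := by
    rintro _ ⟨p, ⟨hp, hproj, hne⟩, rfl⟩
    rw [Nat.card_eq_card_finite_toFinset hfc]
    exact inv_card_le_tau_re hp hproj hne hfc.coe_toFinset.superset
  exact ⟨IsLeast.csInf_eq ⟨⟨_, ⟨hP.1, hP.2.1, hP.2.2.1⟩, hP.2.2.2⟩, hlower⟩, _, hP⟩

/-- If the FC-centre of a countable group `Γ` is finite then the central
granularity equals `1/|Γ_fc|`, and it is attained by a nonzero central projection. -/
theorem centralGranularity_eq_of_finite_fcCentre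
    (Γ : Type*) [Group Γ] [Countable Γ] (hfc : (fcCentre Γ).Finite) :
    centralGranularity Γ = ((Nat.card (fcCentre Γ) : ℝ))⁻¹ ∧
      ∃ p : B Γ, p ∈ vNCenter Γ ∧ IsProjection p ∧ p ≠ 0 ∧
        (tau p).re = ((Nat.card (fcCentre Γ) : ℝ))⁻¹ :=
  centralGranularity_eq_of_finite_fcCentre_general Γ hfc
end
end
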